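/- arXiv:1904.12989 — 6 statements merged into one kernel-verified Lean document; each statement's English description precedes it below -/
import Mathlib

section
/- Let $t_1 \ge 0$ and $t_0 \ge 1$ be integers and let $(a_t)$, $(b_t)$, $(c_t)$ be real sequences satisfying the recurrence $a_{t+1} = \left(1 - \frac{b_t}{t+t_1}\right) a_t + c_t$ for all $t \ge t_0$. Let $(s_t)$ be a sequence of positive real numbers with $\lim_{t\to\infty} s_t/s_{t+1} = 1$, and set $d_t = t(1 - s_t/s_{t+1})$. Assume the limits $b = \lim_{t\to\infty} b_t$, $c = \lim_{t\to\infty} c_t \cdot t / s_t$, and $d = \lim_{t\to\infty} d_t$ all exist, and that $b + d > 1$. Then $\lim_{t\to\infty} a_t/s_t$ exists and equals $c/(b+d)$. -/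
open Filter Topology

/-!
Writing `q t = (1 - b t / (t + t₁)) * s t / s (t + 1)`, the ratios `y t = a t / s t` satisfy
`y (t + 1) = q t * y t + c t / s (t + 1)`, where `t * (1 - q t) → b + d` and
`t * c t / s (t + 1) → c`. Subtracting the fixed point `c / (b + d)` leaves a recurrence
`z (t + 1) = q t * z t + e t` with `t * e t → 0`. Once `1 ≤ t * (1 - q t)` and `t * |e t| ≤ δ`,
the potential `(t - 1) * (|z t| - δ)` is non-increasing, so `|z t| ≤ δ + O(1 / t)`.
-/

lemma mul_abs_sub_le_of_recurrence_step {n q e y y' δ : ℝ} (hn : 0 ≤ n) (hq : 0 ≤ q)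
    (hgap : 1 ≤ n * (1 - q)) (he : n * |e| ≤ δ) (hy : y' = q * y + e) :
    n * (|y'| - δ) ≤ (n - 1) * (|y| - δ) := by
  have habs : |y'| ≤ q * |y| + |e| := by
    calc |y'| ≤ |q * y| + |e| := hy ▸ abs_add_le _ _
      _ = q * |y| + |e| := by rw [abs_mul, abs_of_nonneg hq]
  have hcontract : n * q * |y| ≤ (n - 1) * |y| :=
    mul_le_mul_of_nonneg_right (by linarith) (abs_nonneg y)
  nlinarith [mul_le_mul_of_nonneg_left habs hn]

theorem tendsto_zero_of_recurrence {q e y : ℕ → ℝ}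
    (hrec : ∀ᶠ t in atTop, y (t + 1) = q t * y t + e t)
    (hq : ∀ᶠ t in atTop, 0 ≤ q t)
    (hgap : ∀ᶠ t : ℕ in atTop, 1 ≤ (t : ℝ) * (1 - q t))
    (he : Tendsto (fun t : ℕ => (t : ℝ) * e t) atTop (𝓝 0)) :
    Tendsto y atTop (𝓝 0) := by
  rw [NormedAddGroup.tendsto_nhds_zero]
  intro ε hε
  set δ := ε / 2 with hδ_def
  have hδ : 0 < δ := half_pos hε
  have he_small : ∀ᶠ t : ℕ in atTop, (t : ℝ) * |e t| ≤ δ := by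
    filter_upwards [NormedAddGroup.tendsto_nhds_zero.mp he δ hδ] with t ht
    rw [Real.norm_eq_abs, abs_mul, Nat.abs_cast] at ht
    exact ht.le
  obtain ⟨T, hT⟩ := eventually_atTop.mp (hrec.and (hq.and (hgap.and he_small)))
  set u : ℕ → ℝ := fun t => ((t : ℝ) - 1) * (|y t| - δ)
  have hu : AntitoneOn u {t | T ≤ t} := by
    refine antitoneOn_nat_Ici_of_succ_le fun n hn => ?_
    obtain ⟨hy, hq, hgap, he⟩ := hT n hn
    simpa only [u, Nat.cast_succ, add_sub_cancel_right] using
      mul_abs_sub_le_of_recurrence_step n.cast_nonneg hq hgap he hy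
  have hdecay : Tendsto (fun t : ℕ => u T / ((t : ℝ) - 1)) atTop (𝓝 0) :=
    tendsto_const_nhds.div_atTop (tendsto_atTop_add_const_right _ _ tendsto_natCast_atTop_atTop)
  filter_upwards [eventually_ge_atTop T, eventually_ge_atTop 2,
    hdecay.eventually (eventually_lt_nhds hδ)] with t hTt h2t hsmall
  have ht : (0 : ℝ) < t - 1 := by
    have : (2 : ℝ) ≤ t := by exact_mod_cast h2t
    linarith
  have hut : u t ≤ u T := hu (le_refl T) hTt hTt
  have : |y t| - δ ≤ u T / ((t : ℝ) - 1) := by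
    rw [le_div_iff₀ ht, mul_comm]
    exact hut
  rw [Real.norm_eq_abs]
  linarith

theorem tendsto_of_recurrence {q e y : ℕ → ℝ} {β γ : ℝ}
    (hrec : ∀ᶠ t in atTop, y (t + 1) = q t * y t + e t)
    (hq : Tendsto (fun t : ℕ => (t : ℝ) * (1 - q t)) atTop (𝓝 β)) (hβ : 1 < β)
    (he : Tendsto (fun t : ℕ => (t : ℝ) * e t) atTop (𝓝 γ)) :
    Tendsto y atTop (𝓝 (γ / β)) := by
  have hq_nonneg : ∀ᶠ t in atTop, 0 ≤ q t := by
    filter_upwards [(hq.div_atTop tendsto_natCast_atTop_atTop).eventually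
      (eventually_le_nhds one_pos), eventually_ne_atTop 0] with t ht ht0
    rw [mul_div_cancel_left₀ _ (Nat.cast_ne_zero.mpr ht0)] at ht
    linarith
  have hshift : Tendsto (fun t : ℕ => (t : ℝ) * (e t + (q t - 1) * (γ / β))) atTop (𝓝 0) := by
    have h := he.sub (hq.mul_const (γ / β))
    rw [mul_div_cancel₀ _ (by linarith : β ≠ 0), sub_self] at h
    exact h.congr fun t => by ring
  have hz := tendsto_zero_of_recurrence (y := fun t => y t - γ / β)
    (hrec.mono fun t ht => by rw [ht]; ring) hq_nonneg (hq.eventually (eventually_ge_nhds hβ))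
    hshift
  simpa using hz.add_const (γ / β)

theorem stmt_0_general (t₁ t₀ : ℕ)
    (a b c s : ℕ → ℝ)
    (hrec : ∀ t : ℕ, t₀ ≤ t → a (t + 1) = (1 - b t / ((t : ℝ) + (t₁ : ℝ))) * a t + c t)
    (hspos : ∀ t, 0 < s t)
    (hs : Tendsto (fun t : ℕ => s t / s (t + 1)) atTop (𝓝 1))
    (B C D : ℝ)
    (hb : Tendsto b atTop (𝓝 B))
    (hc : Tendsto (fun t : ℕ => c t * (t : ℝ) / s t) atTop (𝓝 C))
    (hd : Tendsto (fun t : ℕ => (t : ℝ) * (1 - s t / s (t + 1))) atTop (𝓝 D))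
    (hBD : 1 < B + D) :
    Tendsto (fun t : ℕ => a t / s t) atTop (𝓝 (C / (B + D))) := by
  set q : ℕ → ℝ := fun t => (1 - b t / ((t : ℝ) + (t₁ : ℝ))) * (s t / s (t + 1))
  have hrec' : ∀ᶠ t in atTop, a (t + 1) / s (t + 1) = q t * (a t / s t) + c t / s (t + 1) := by
    filter_upwards [eventually_ge_atTop t₀] with t ht
    rw [hrec t ht]
    simp only [q]
    field_simp [(hspos t).ne']
  have hq : Tendsto (fun t : ℕ => (t : ℝ) * (1 - q t)) atTop (𝓝 (B + D)) := by
    have h := hd.add ((hb.mul hs).mul (tendsto_natCast_div_add_atTop (t₁ : ℝ)))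
    rw [mul_one, mul_one, add_comm] at h
    exact h.congr fun t => by ring
  have he : Tendsto (fun t : ℕ => (t : ℝ) * (c t / s (t + 1))) atTop (𝓝 C) := by
    have h := hc.mul hs
    rw [mul_one] at h
    exact h.congr fun t => by field_simp [(hspos t).ne']
  exact tendsto_of_recurrence hrec' hq hBD he

/-- Lemma 4 (from Avin et al.): if a real sequence satisfies the recurrence
`a (t+1) = (1 - b t / (t + t₁)) * a t + c t` for `t ≥ t₀`, and `s` is a positive
sequence with `s t / s (t+1) → 1`, `d t = t * (1 - s t / s (t+1))`, and the limits
`b t → b`, `c t * t / s t → c`, `d t → d` exist with `b + d > 1`, then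
`a t / s t → c / (b + d)`. -/
theorem stmt_0 (t₁ t₀ : ℕ) (ht₀ : 1 ≤ t₀)
    (a b c s : ℕ → ℝ)
    (hrec : ∀ t : ℕ, t₀ ≤ t → a (t + 1) = (1 - b t / ((t : ℝ) + (t₁ : ℝ))) * a t + c t)
    (hspos : ∀ t, 0 < s t)
    (hs : Tendsto (fun t : ℕ => s t / s (t + 1)) atTop (𝓝 1))
    (B C D : ℝ)
    (hb : Tendsto b atTop (𝓝 B))
    (hc : Tendsto (fun t : ℕ => c t * (t : ℝ) / s t) atTop (𝓝 C))
    (hd : Tendsto (fun t : ℕ => (t : ℝ) * (1 - s t / s (t + 1))) atTop (𝓝 D))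
    (hBD : 1 < B + D) :
    Tendsto (fun t : ℕ => a t / s t) atTop (𝓝 (C / (B + D))) :=
  stmt_0_general t₁ t₀ a b c s hrec hspos hs B C D hb hc hd hBD
end

section
/- Let $(y_t)_{t\ge 1}$ be a sequence of strictly positive real numbers. Assume that $y = \lim_{t\to\infty} y_t$ exists (and is finite) and that $\Gamma = \lim_{t\to\infty} \frac{y_{t+1} \cdot t}{\sum_{j=1}^{t} y_j}$ exists. Then: if $y > 0$ we have $\Gamma = 1$, and if $y = 0$ we have $\Gamma \le 1$. -/
/-!
Write `m t = (y 1 + ⋯ + y t) / t` for the running mean, so the ratio in question is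
`y (t + 1) / m t`. By Cesàro, `m t → Y`; hence for `Y > 0` the ratio tends to `Y / Y = 1`.
If `Y = 0` and the ratio had a limit `Γ > 1`, then eventually every new term `y (t + 1)`
would exceed the current mean `m t`, so `m` would be eventually nondecreasing; being
positive, it could not tend to `0`.
-/

open Filter Topology Finset

noncomputable def partialMean (y : ℕ → ℝ) (t : ℕ) : ℝ :=
  (∑ j ∈ Icc 1 t, y j) / t

lemma sum_Icc_one_eq_sum_range (y : ℕ → ℝ) (t : ℕ) :
    ∑ j ∈ Icc 1 t, y j = ∑ i ∈ range t, y (i + 1) := by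
  induction t with
  | zero => simp
  | succ t ih => rw [sum_Icc_succ_top (by omega), sum_range_succ, ih]

lemma Filter.Tendsto.partialMean {y : ℕ → ℝ} {Y : ℝ} (hY : Tendsto y atTop (𝓝 Y)) :
    Tendsto (partialMean y) atTop (𝓝 Y) := by
  refine (hY.comp (tendsto_add_atTop_nat 1)).cesaro.congr fun t => ?_
  rw [_root_.partialMean, sum_Icc_one_eq_sum_range, inv_mul_eq_div]
  rfl

lemma partialMean_pos {y : ℕ → ℝ} (hy : ∀ t, 1 ≤ t → 0 < y t) {t : ℕ} (ht : 1 ≤ t) :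
    0 < partialMean y t :=
  div_pos (sum_pos (fun j hj => hy j (mem_Icc.mp hj).1) ⟨1, mem_Icc.mpr ⟨le_rfl, ht⟩⟩)
    (by exact_mod_cast ht)

lemma partialMean_le_partialMean_succ {y : ℕ → ℝ} {t : ℕ} (ht : 1 ≤ t)
    (h : partialMean y t ≤ y (t + 1)) : partialMean y t ≤ partialMean y (t + 1) := by
  have ht' : (0 : ℝ) < t := by exact_mod_cast ht
  rw [partialMean, div_le_iff₀ ht'] at h
  rw [partialMean, partialMean, sum_Icc_succ_top (by omega), Nat.cast_succ,
    div_le_div_iff₀ ht' (by positivity)]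
  nlinarith

lemma le_of_tendsto_of_le_succ {a : ℕ → ℝ} {N : ℕ} {L : ℝ}
    (hmono : ∀ n ≥ N, a n ≤ a (n + 1)) (ha : Tendsto a atTop (𝓝 L)) : a N ≤ L :=
  ge_of_tendsto ha <| eventually_atTop.mpr
    ⟨N, fun _ hn => monotoneOn_nat_Ici_of_le_succ hmono (Set.mem_Ici.mpr le_rfl) hn hn⟩

lemma le_one_of_tendsto_div_partialMean {y : ℕ → ℝ} (hy : ∀ t, 1 ≤ t → 0 < y t) {Γ : ℝ}
    (hy0 : Tendsto y atTop (𝓝 0))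
    (hΓ : Tendsto (fun t => y (t + 1) / partialMean y t) atTop (𝓝 Γ)) : Γ ≤ 1 := by
  by_contra! hΓ1
  obtain ⟨N, hN⟩ := eventually_atTop.mp
    ((hΓ.eventually_const_le hΓ1).and (eventually_ge_atTop 1))
  have hmono : ∀ n ≥ N, partialMean y n ≤ partialMean y (n + 1) := fun n hn =>
    partialMean_le_partialMean_succ (hN n hn).2 <|
      (one_le_div (partialMean_pos hy (hN n hn).2)).mp (hN n hn).1
  exact (partialMean_pos hy (hN N le_rfl).2).not_ge
    (le_of_tendsto_of_le_succ hmono hy0.partialMean)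

/-- Lemma (from Avin et al.): for a sequence of strictly positive reals `y`,
if `y t → Y` and `y (t+1) * t / ∑_{j=1}^t y j → Γ`, then `Y > 0` implies `Γ = 1`
and `Y = 0` implies `Γ ≤ 1`. -/
theorem stmt_1 (y : ℕ → ℝ) (hy : ∀ t : ℕ, 1 ≤ t → 0 < y t)
    (Y Γ : ℝ)
    (hY : Tendsto y atTop (𝓝 Y))
    (hΓ : Tendsto (fun t : ℕ => y (t + 1) * (t : ℝ) / ∑ j ∈ Finset.Icc 1 t, y j)
      atTop (𝓝 Γ)) :
    (0 < Y → Γ = 1) ∧ (Y = 0 → Γ ≤ 1) := by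
  have hΓ' : Tendsto (fun t => y (t + 1) / partialMean y t) atTop (𝓝 Γ) := by
    simpa only [partialMean, div_div_eq_mul_div] using hΓ
  refine ⟨fun hYpos => ?_, fun hY0 => ?_⟩
  · have h := (hY.comp (tendsto_add_atTop_nat 1)).div hY.partialMean hYpos.ne'
    rw [div_self hYpos.ne'] at h
    exact tendsto_nhds_unique hΓ' h
  · subst hY0
    exact le_one_of_tendsto_div_partialMean hy hY hΓ'
end

section
/- Fix $p \in (0,1]$, an integer $m \ge 1$, and an integer $s' \ge 1$. Let $(Z_t)_{t \ge s'}$ be a stochastic process on a probability space with filtration $(\mathcal{F}_t)_{t \ge s'}$, adapted, taking values in the positive integers, such that: $1 \le Z_{s'} \le 2m$ almost surely; $Z_t \le 2t$ almost surely for every $t$; for every $t > s'$, $Z_t - Z_{t-1} \in \{0,1\}$ almost surely and $\Pr[Z_t = Z_{t-1} + 1 \mid \mathcal{F}_{t-1}] = \frac{p\, Z_{t-1}}{2t-1}$ almost surely. Then for every positive integer $k$ and every $t \ge s'$, $\mathbb{E}[(Z_t)^{(k)}] \le (2m)^{(k)}\, 2^{pk/2} \left(\frac{t}{s'}\right)^{pk/2}$.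 -/
/-!
Write `Z^(k)` for the rising factorial. Since `Z (Z+1)^(k) = Z^(k) (Z+k)`, a jump of `Z` raises
`Z^(k)` by `k Z^(k) / Z`, and the jump has conditional probability `p Z / (2t-1)`; the factor `Z`
cancels, so `E[Z_t^(k)] = (1 + p k / (2t-1)) E[Z_{t-1}^(k)]` exactly. Each factor is at most
`((2t-1)/(2t-3))^(pk/2)`, and the product telescopes to `((2t-1)/(2s'-1))^(pk/2) ≤ (2t/s')^(pk/2)`.
-/

open MeasureTheory Filter

/-- The rising factorial `a^(k) = a (a+1) (a+2) ⋯ (a+k-1)` of a real number `a`. -/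
noncomputable def risingFactorial (a : ℝ) (k : ℕ) : ℝ :=
  ∏ i ∈ Finset.range k, (a + (i : ℝ))

section RisingFactorial

lemma risingFactorial_nonneg {a : ℝ} (ha : 0 ≤ a) (k : ℕ) : 0 ≤ risingFactorial a k :=
  Finset.prod_nonneg fun _ _ => by positivity

lemma risingFactorial_mono {a b : ℝ} (ha : 0 ≤ a) (hab : a ≤ b) (k : ℕ) :
    risingFactorial a k ≤ risingFactorial b k :=
  Finset.prod_le_prod (fun _ _ => by positivity) fun _ _ => by linarith

lemma mul_risingFactorial_add_one (a : ℝ) (k : ℕ) :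
    a * risingFactorial (a + 1) k = risingFactorial a k * (a + k) := by
  calc a * risingFactorial (a + 1) k = risingFactorial a (k + 1) := by
        simp only [risingFactorial, Finset.prod_range_succ', Nat.cast_succ, Nat.cast_zero,
          add_zero, add_assoc, add_comm (1 : ℝ)]
        ring
    _ = risingFactorial a k * (a + k) := Finset.prod_range_succ _ _

lemma mul_risingFactorial_add_one_sub (a : ℝ) (k : ℕ) :
    a * (risingFactorial (a + 1) k - risingFactorial a k) = k * risingFactorial a k := by
  rw [mul_sub, mul_risingFactorial_add_one]
  ring

end RisingFactorial

lemma one_add_mul_sub_div_le_rpow {x y α : ℝ} (hx : 0 < x) (hy : 0 < y) (hα : 0 ≤ α) :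
    1 + α * ((y - x) / y) ≤ (y / x) ^ α := by
  have hlog : (y - x) / y ≤ Real.log (y / x) := by
    calc (y - x) / y = 1 - (y / x)⁻¹ := by field_simp
      _ ≤ Real.log (y / x) := Real.one_sub_inv_le_log_of_pos (by positivity)
  rw [Real.rpow_def_of_pos (by positivity), mul_comm (Real.log _)]
  nlinarith [Real.add_one_le_exp (α * Real.log (y / x)), mul_le_mul_of_nonneg_left hlog hα]

lemma two_mul_sub_one_div_le {s t : ℝ} (hs : 1 ≤ s) (ht : 0 ≤ t) :
    (2 * t - 1) / (2 * s - 1) ≤ 2 * (t / s) := by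
  rw [div_le_iff₀ (by linarith), mul_div_assoc', div_mul_eq_mul_div, le_div_iff₀ (by linarith)]
  nlinarith

lemma le_rpow_mul_of_succ_le {f : ℕ → ℝ} {α : ℝ} {s : ℕ} (hα : 0 ≤ α) (hs : 1 ≤ s)
    (hfs : 0 ≤ f s) (hf : ∀ u, s ≤ u → f (u + 1) ≤ (1 + 2 * α / (2 * u + 1)) * f u) :
    ∀ t, s ≤ t → f t ≤ ((2 * t - 1) / (2 * s - 1)) ^ α * f s := by
  have hs1 : (1 : ℝ) ≤ s := by exact_mod_cast hs
  intro t ht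
  induction t, ht using Nat.le_induction with
  | base => rw [div_self (by linarith), Real.one_rpow, one_mul]
  | succ u hu ih =>
    have hu1 : (s : ℝ) ≤ u := by exact_mod_cast hu
    have hfactor : 1 + 2 * α / (2 * u + 1) ≤ ((2 * u + 1) / (2 * u - 1)) ^ α := by
      convert one_add_mul_sub_div_le_rpow (x := 2 * (u : ℝ) - 1) (y := 2 * u + 1)
        (by linarith) (by linarith) hα using 2
      ring
    have hprod : ((2 * u + 1) / (2 * u - 1)) ^ α * ((2 * u - 1) / (2 * s - 1)) ^ α
        = ((2 * ((u + 1 : ℕ) : ℝ) - 1) / (2 * s - 1)) ^ α := by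
      rw [← Real.mul_rpow (div_nonneg (by positivity) (by linarith))
        (div_nonneg (by linarith) (by linarith))]
      congr 1
      field_simp [show (2 * u - 1 : ℝ) ≠ 0 by linarith]
      push_cast
      ring
    have hR : 0 ≤ ((2 * u - 1) / (2 * s - 1) : ℝ) ^ α * f s :=
      mul_nonneg (Real.rpow_nonneg (div_nonneg (by linarith) (by linarith)) α) hfs
    calc f (u + 1) ≤ (1 + 2 * α / (2 * u + 1)) * f u := hf u hu
      _ ≤ (1 + 2 * α / (2 * u + 1)) * (((2 * u - 1) / (2 * s - 1)) ^ α * f s) :=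
          mul_le_mul_of_nonneg_left ih (by have := hα; positivity)
      _ ≤ ((2 * u + 1) / (2 * u - 1)) ^ α * (((2 * u - 1) / (2 * s - 1)) ^ α * f s) :=
          mul_le_mul_of_nonneg_right hfactor hR
      _ = ((2 * ((u + 1 : ℕ) : ℝ) - 1) / (2 * s - 1)) ^ α * f s := by
          rw [← mul_assoc, hprod]

section Moments

variable {Ω : Type*} {m mΩ : MeasurableSpace Ω} {μ : Measure Ω}

lemma integrable_comp_of_ae_le [IsFiniteMeasure μ] {X : Ω → ℕ} (hX : Measurable X) {N : ℕ}
    (hN : ∀ᵐ ω ∂μ, X ω ≤ N) (φ : ℕ → ℝ) : Integrable (fun ω => φ (X ω)) μ := by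
  refine Integrable.mono' (integrable_const (∑ n ∈ Finset.range (N + 1), ‖φ n‖))
    (measurable_from_top.comp hX).aestronglyMeasurable ?_
  filter_upwards [hN] with ω hω
  exact Finset.single_le_sum (f := fun n => ‖φ n‖) (fun _ _ => norm_nonneg _)
    (Finset.mem_range.2 (Nat.lt_succ_of_le hω))

lemma integral_risingFactorial_of_jump [IsFiniteMeasure μ] (hm : m ≤ mΩ) {X Y : Ω → ℕ}
    (hX : Measurable[m] X) (hY : Measurable Y) {N : ℕ} (hXN : ∀ᵐ ω ∂μ, X ω ≤ N)
    (hstep : ∀ᵐ ω ∂μ, Y ω = X ω ∨ Y ω = X ω + 1) {c : ℝ}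
    (hcond : μ[{ω | Y ω = X ω + 1}.indicator (fun _ => (1 : ℝ)) | m] =ᵐ[μ] fun ω => c * X ω)
    (k : ℕ) :
    ∫ ω, risingFactorial (Y ω) k ∂μ = (1 + c * k) * ∫ ω, risingFactorial (X ω) k ∂μ := by
  have hX' : Measurable X := hX.mono hm le_rfl
  set g : Ω → ℝ := fun ω => risingFactorial (X ω) k
  set h : Ω → ℝ := fun ω => risingFactorial ((X ω : ℝ) + 1) k - risingFactorial (X ω) k
  set jump : Ω → ℝ := {ω | Y ω = X ω + 1}.indicator (fun _ => (1 : ℝ))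
  have hg : Integrable g μ :=
    integrable_comp_of_ae_le hX' hXN (fun n : ℕ => risingFactorial n k)
  have hh : Integrable h μ := integrable_comp_of_ae_le hX' hXN
    (fun n : ℕ => risingFactorial ((n : ℝ) + 1) k - risingFactorial n k)
  have hjump : Integrable jump μ :=
    (integrable_const 1).indicator (measurableSet_eq_fun hY (hX'.add measurable_const))
  have hhjump : Integrable (h * jump) μ := by
    refine hh.norm.mono' (hh.aestronglyMeasurable.mul hjump.aestronglyMeasurable)
      (Eventually.of_forall fun ω => ?_)
    simp only [Pi.mul_apply, norm_mul, jump]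
    exact mul_le_of_le_one_right (norm_nonneg _) (by by_cases hω : Y ω = X ω + 1 <;> simp [hω])
  have hsplit : (fun ω => risingFactorial (Y ω) k) =ᵐ[μ] g + h * jump := by
    filter_upwards [hstep] with ω hω
    rcases hω with hω | hω <;> simp [g, h, jump, hω]
  have hh_meas : StronglyMeasurable[m] h :=
    (measurable_from_top (f := fun n : ℕ => risingFactorial ((n : ℝ) + 1) k
      - risingFactorial n k)).comp hX |>.stronglyMeasurable
  have hjump_term : ∫ ω, (h * jump) ω ∂μ = c * k * ∫ ω, g ω ∂μ := by
    rw [← integral_condExp hm, ← integral_const_mul]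
    refine integral_congr_ae ?_
    filter_upwards [condExp_mul_of_stronglyMeasurable_left hh_meas hhjump hjump, hcond]
      with ω hpull hω
    rw [hpull, Pi.mul_apply, hω]
    linear_combination c * mul_risingFactorial_add_one_sub (X ω) k
  rw [integral_congr_ae hsplit, integral_add' hg hhjump, hjump_term]
  ring

lemma integral_risingFactorial_le [IsProbabilityMeasure μ] {X : Ω → ℕ} {b : ℝ}
    (hXb : ∀ᵐ ω ∂μ, (X ω : ℝ) ≤ b) (k : ℕ) :
    ∫ ω, risingFactorial (X ω) k ∂μ ≤ risingFactorial b k :=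
  calc ∫ ω, risingFactorial (X ω) k ∂μ ≤ ∫ _, risingFactorial b k ∂μ := by
        refine integral_mono_of_nonneg (Eventually.of_forall fun ω =>
          risingFactorial_nonneg (Nat.cast_nonneg _) k) (integrable_const _) ?_
        filter_upwards [hXb] with ω hω
        exact risingFactorial_mono (Nat.cast_nonneg _) hω k
    _ = risingFactorial b k := by simp

end Moments

theorem stmt_5_general (p : ℝ) (hp0 : 0 < p) (m : ℕ)
    (s' : ℕ) (hs' : 1 ≤ s')
    (Ω : Type*) (mΩ : MeasurableSpace Ω) (μ : Measure Ω) (hprob : IsProbabilityMeasure μ)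
    (ℱ : Filtration ℕ mΩ)
    (Z : ℕ → Ω → ℕ)
    (hadapted : ∀ t : ℕ, s' ≤ t → Measurable[ℱ t] (Z t))
    (hinit : ∀ᵐ ω ∂μ, 1 ≤ Z s' ω ∧ Z s' ω ≤ 2 * m)
    (hbdd : ∀ t : ℕ, s' ≤ t → ∀ᵐ ω ∂μ, Z t ω ≤ 2 * t)
    (hstep : ∀ t : ℕ, s' < t → ∀ᵐ ω ∂μ,
      Z t ω = Z (t - 1) ω ∨ Z t ω = Z (t - 1) ω + 1)
    (hcond : ∀ t : ℕ, s' < t →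
      μ[Set.indicator {ω | Z t ω = Z (t - 1) ω + 1} (fun _ => (1 : ℝ)) | ℱ (t - 1)]
        =ᵐ[μ] fun ω => p * (Z (t - 1) ω : ℝ) / (2 * (t : ℝ) - 1)) :
    ∀ k : ℕ, 1 ≤ k → ∀ t : ℕ, s' ≤ t →
      (∫ ω, risingFactorial (Z t ω : ℝ) k ∂μ) ≤
        risingFactorial (2 * (m:ℝ)) k * (2 : ℝ) ^ (p * (k : ℝ) / 2) *
          ((t : ℝ) / (s' : ℝ)) ^ (p * (k : ℝ) / 2) := by
  intro k _ t ht
  set α := p * (k : ℝ) / 2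
  have hα : 0 ≤ α := by positivity
  have hmoment : ∀ u, s' ≤ u → ∫ ω, risingFactorial (Z (u + 1) ω) k ∂μ
      ≤ (1 + 2 * α / (2 * u + 1)) * ∫ ω, risingFactorial (Z u ω) k ∂μ := by
    intro u hu
    rw [integral_risingFactorial_of_jump (c := p / (2 * ((u + 1 : ℕ) : ℝ) - 1)) (ℱ.le u)
      (hadapted u hu) ((hadapted (u + 1) (by omega)).mono (ℱ.le _) le_rfl) (hbdd u hu)
      (by simpa using hstep (u + 1) (by omega)) ?_ k]
    · refine le_of_eq ?_
      push_cast [α]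
      ring
    · filter_upwards [hcond (u + 1) (by omega)] with ω hω
      simp only [Nat.add_sub_cancel] at hω
      rw [hω]
      ring
  have hmoment_nonneg : ∀ u, 0 ≤ ∫ ω, risingFactorial (Z u ω) k ∂μ := fun u =>
    integral_nonneg fun ω => risingFactorial_nonneg (Nat.cast_nonneg _) k
  have hinit_moment : ∫ ω, risingFactorial (Z s' ω) k ∂μ ≤ risingFactorial (2 * m) k :=
    integral_risingFactorial_le (by filter_upwards [hinit] with ω hω; exact_mod_cast hω.2) k
  have hs1 : (1 : ℝ) ≤ s' := by exact_mod_cast hs'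
  calc ∫ ω, risingFactorial (Z t ω) k ∂μ
      ≤ ((2 * t - 1) / (2 * s' - 1)) ^ α * ∫ ω, risingFactorial (Z s' ω) k ∂μ :=
        le_rpow_mul_of_succ_le (f := fun u => ∫ ω, risingFactorial (Z u ω) k ∂μ) hα hs'
          (hmoment_nonneg s') hmoment t ht
    _ ≤ (2 * (t / s')) ^ α * risingFactorial (2 * m) k := by
        refine mul_le_mul (Real.rpow_le_rpow (div_nonneg ?_ (by linarith))
          (two_mul_sub_one_div_le hs1 t.cast_nonneg) hα) hinit_moment (hmoment_nonneg s')
          (by positivity)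
        linarith [show (s' : ℝ) ≤ t by exact_mod_cast ht]
    _ = risingFactorial (2 * (m : ℝ)) k * 2 ^ α * (t / s') ^ α := by
        rw [Real.mul_rpow (by norm_num) (by positivity)]; ring

/-- Lemma 1 (degree moment bound for GPA): if `Z` is an adapted positive-integer-valued
process with `1 ≤ Z s' ≤ 2 m`, `Z t ≤ 2 t`, increments in `{0,1}`, and conditional jump
probability `p * Z (t-1) / (2 t - 1)`, then
`E[(Z t)^(k)] ≤ (2 m)^(k) * 2^(p k / 2) * (t / s')^(p k / 2)`. -/
theorem stmt_5 (p : ℝ) (hp0 : 0 < p) (hp1 : p ≤ 1) (m : ℕ) (hm : 1 ≤ m)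
    (s' : ℕ) (hs' : 1 ≤ s')
    (Ω : Type*) (mΩ : MeasurableSpace Ω) (μ : Measure Ω) (hprob : IsProbabilityMeasure μ)
    (ℱ : Filtration ℕ mΩ)
    (Z : ℕ → Ω → ℕ)
    (hadapted : ∀ t : ℕ, s' ≤ t → Measurable[ℱ t] (Z t))
    (hpos : ∀ t : ℕ, s' ≤ t → ∀ᵐ ω ∂μ, 1 ≤ Z t ω)
    (hinit : ∀ᵐ ω ∂μ, 1 ≤ Z s' ω ∧ Z s' ω ≤ 2 * m)
    (hbdd : ∀ t : ℕ, s' ≤ t → ∀ᵐ ω ∂μ, Z t ω ≤ 2 * t)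
    (hstep : ∀ t : ℕ, s' < t → ∀ᵐ ω ∂μ,
      Z t ω = Z (t - 1) ω ∨ Z t ω = Z (t - 1) ω + 1)
    (hcond : ∀ t : ℕ, s' < t →
      μ[Set.indicator {ω | Z t ω = Z (t - 1) ω + 1} (fun _ => (1 : ℝ)) | ℱ (t - 1)]
        =ᵐ[μ] fun ω => p * (Z (t - 1) ω : ℝ) / (2 * (t : ℝ) - 1)) :
    ∀ k : ℕ, 1 ≤ k → ∀ t : ℕ, s' ≤ t →
      (∫ ω, risingFactorial (Z t ω : ℝ) k ∂μ) ≤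
        risingFactorial (2 * (m : ℝ)) k * (2 : ℝ) ^ (p * (k : ℝ) / 2) *
          ((t : ℝ) / (s' : ℝ)) ^ (p * (k : ℝ) / 2) :=
  stmt_5_general p hp0 m s' hs' Ω mΩ μ hprob ℱ Z hadapted hinit hbdd hstep hcond
end

section
/- Fix $p \in (0,1]$ and an integer $t \ge 2$. Let $Z$ be a random variable taking values in the positive integers with $Z \le 2(t-1)$ almost surely, and let $Y$ be a $\{0,1\}$-valued random variable with $\Pr[Y = 1 \mid Z] = \frac{p\,Z}{2t-1}$ almost surely. Then for every positive integer $k$, $\mathbb{E}[(Z+Y)^{(k)}] = \mathbb{E}[Z^{(k)}]\left(1 + \frac{pk}{2t-1}\right)$. -/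
open MeasureTheory

/-!
Since `Y ∈ {0, 1}` and `(a + 1)^(k) - a^(k) = k (a + 1)^(k-1)`, we have
`(Z + Y)^(k) = Z^(k) + Y k (Z + 1)^(k-1)`. The second term is `Y` times a function of `Z`, so its
expectation is unchanged when `Y` is replaced by `P[Y = 1 ∣ Z] = p Z / (2t - 1)`, and then
`Z k (Z + 1)^(k-1) = k Z^(k)` gives the factor `p k / (2t - 1)`. The bound on `Z` makes every
integrand bounded, hence integrable.
-/

theorem risingFactorial_succ (a : ℝ) (m : ℕ) :
    risingFactorial a (m + 1) = a * risingFactorial (a + 1) m := by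
  simp only [risingFactorial, Finset.prod_range_succ', Nat.cast_succ, Nat.cast_zero, add_zero]
  rw [mul_comm]
  congr 1
  exact Finset.prod_congr rfl fun i _ => by ring

theorem risingFactorial_add_one (a : ℝ) (m : ℕ) :
    risingFactorial (a + 1) (m + 1) =
      risingFactorial a (m + 1) + (m + 1) * risingFactorial (a + 1) m := by
  rw [risingFactorial_succ a, risingFactorial, Finset.prod_range_succ, ← risingFactorial]
  ring

theorem integrable_comp_of_ae_le_s6 {Ω : Type*} {mΩ : MeasurableSpace Ω} {μ : Measure Ω}
    [IsFiniteMeasure μ] {X : Ω → ℕ} (hX : Measurable X) {B : ℕ} (hB : ∀ᵐ ω ∂μ, X ω ≤ B)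
    {E : Type*} [NormedAddCommGroup E] (g : ℕ → E) : Integrable (fun ω => g (X ω)) μ := by
  refine .of_bound (StronglyMeasurable.of_discrete.comp_measurable hX).aestronglyMeasurable
    (∑ n ∈ Finset.range (B + 1), ‖g n‖) ?_
  filter_upwards [hB] with ω hω
  exact Finset.single_le_sum (fun n _ => norm_nonneg (g n)) (Finset.mem_range_succ_iff.mpr hω)

theorem integral_mul_condExp_of_stronglyMeasurable_left {Ω : Type*} {m m₀ : MeasurableSpace Ω}
    {μ : Measure Ω} (hm : m ≤ m₀) [SigmaFinite (μ.trim hm)] {f g : Ω → ℝ}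
    (hf : StronglyMeasurable[m] f) (hfg : Integrable (f * g) μ) (hg : Integrable g μ) :
    ∫ ω, f ω * (μ[g | m]) ω ∂μ = ∫ ω, f ω * g ω ∂μ := by
  refine (integral_congr_ae ?_).trans (integral_condExp hm (f := f * g))
  exact (condExp_mul_of_stronglyMeasurable_left hf hfg hg).symm

theorem stmt_6_general (p : ℝ) (t : ℕ)
    (Ω : Type*) (mΩ : MeasurableSpace Ω) (μ : Measure Ω) (hprob : IsProbabilityMeasure μ)
    (Z Y : Ω → ℕ) (hZmeas : Measurable Z) (hYmeas : Measurable Y)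
    (hZbdd : ∀ᵐ ω ∂μ, Z ω ≤ 2 * (t - 1))
    (hY01 : ∀ᵐ ω ∂μ, Y ω = 0 ∨ Y ω = 1)
    (hcond : μ[Set.indicator {ω | Y ω = 1} (fun _ => (1 : ℝ)) |
        MeasurableSpace.comap Z inferInstance]
      =ᵐ[μ] fun ω => p * (Z ω : ℝ) / (2 * (t : ℝ) - 1)) :
    ∀ k : ℕ, 1 ≤ k →
      (∫ ω, risingFactorial ((Z ω + Y ω : ℕ) : ℝ) k ∂μ) =
        (∫ ω, risingFactorial ((Z ω : ℕ) : ℝ) k ∂μ) *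
          (1 + p * (k : ℝ) / (2 * (t : ℝ) - 1)) := by
  intro k hk
  obtain ⟨m, rfl⟩ : ∃ m, k = m + 1 := ⟨k - 1, by omega⟩
  set I := Set.indicator {ω | Y ω = 1} (fun _ => (1 : ℝ))
  set G : ℕ → ℝ := fun n => (m + 1) * risingFactorial (n + 1) m
  have hI : Integrable I μ := (integrable_const 1).indicator (hYmeas (measurableSet_singleton 1))
  have hGI : Integrable (fun ω => G (Z ω) * I ω) μ := by
    refine (integrable_comp_of_ae_le_s6 hZmeas hZbdd G).mul_bdd hI.aestronglyMeasurable
      (c := 1) (.of_forall fun ω => ?_)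
    by_cases h : Y ω = 1 <;> simp [I, h]
  have hGZ : StronglyMeasurable[MeasurableSpace.comap Z inferInstance] fun ω => G (Z ω) :=
    ((measurable_from_top (f := G)).comp (comap_measurable Z)).stronglyMeasurable
  have hdecomp : ∀ᵐ ω ∂μ, risingFactorial ((Z ω + Y ω : ℕ) : ℝ) (m + 1) =
      risingFactorial (Z ω : ℝ) (m + 1) + G (Z ω) * I ω := by
    filter_upwards [hY01] with ω hω
    rcases hω with h | h
    · simp [I, h]
    · simpa [I, h, G] using risingFactorial_add_one (Z ω) m
  have hG : ∀ n : ℕ, G n * (p * n / (2 * t - 1)) =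
      p * (m + 1 : ℕ) / (2 * t - 1) * risingFactorial n (m + 1) := fun n => by
    rw [risingFactorial_succ]; push_cast; ring
  calc ∫ ω, risingFactorial ((Z ω + Y ω : ℕ) : ℝ) (m + 1) ∂μ
      = ∫ ω, risingFactorial (Z ω : ℝ) (m + 1) ∂μ + ∫ ω, G (Z ω) * I ω ∂μ := by
        rw [← integral_add (integrable_comp_of_ae_le_s6 hZmeas hZbdd
          fun n => risingFactorial n (m + 1)) hGI]
        exact integral_congr_ae hdecomp
    _ = ∫ ω, risingFactorial (Z ω : ℝ) (m + 1) ∂μ +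
          ∫ ω, G (Z ω) * (p * Z ω / (2 * t - 1)) ∂μ := by
        rw [← integral_mul_condExp_of_stronglyMeasurable_left hZmeas.comap_le hGZ hGI hI]
        exact congrArg _ (integral_congr_ae (hcond.mono fun ω h => congrArg (G (Z ω) * ·) h))
    _ = _ := by
        simp only [hG, integral_const_mul]
        ring

/-- One-step moment identity: if `Z` is a positive-integer random variable with
`Z ≤ 2 (t - 1)` a.s. and `Y ∈ {0,1}` with `P[Y = 1 ∣ Z] = p Z / (2 t - 1)`, then
`E[(Z + Y)^(k)] = E[Z^(k)] * (1 + p k / (2 t - 1))`. -/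
theorem stmt_6 (p : ℝ) (hp0 : 0 < p) (hp1 : p ≤ 1) (t : ℕ) (ht : 2 ≤ t)
    (Ω : Type*) (mΩ : MeasurableSpace Ω) (μ : Measure Ω) (hprob : IsProbabilityMeasure μ)
    (Z Y : Ω → ℕ) (hZmeas : Measurable Z) (hYmeas : Measurable Y)
    (hZpos : ∀ᵐ ω ∂μ, 1 ≤ Z ω) (hZbdd : ∀ᵐ ω ∂μ, Z ω ≤ 2 * (t - 1))
    (hY01 : ∀ᵐ ω ∂μ, Y ω = 0 ∨ Y ω = 1)
    (hcond : μ[Set.indicator {ω | Y ω = 1} (fun _ => (1 : ℝ)) |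
        MeasurableSpace.comap Z inferInstance]
      =ᵐ[μ] fun ω => p * (Z ω : ℝ) / (2 * (t : ℝ) - 1)) :
    ∀ k : ℕ, 1 ≤ k →
      (∫ ω, risingFactorial ((Z ω + Y ω : ℕ) : ℝ) k ∂μ) =
        (∫ ω, risingFactorial ((Z ω : ℕ) : ℝ) k ∂μ) *
          (1 + p * (k : ℝ) / (2 * (t : ℝ) - 1)) :=
  stmt_6_general p t Ω mΩ μ hprob Z Y hZmeas hYmeas hZbdd hY01 hcond
end

section
/- Fix $p \in (0,1]$ and a positive integer $l$. For each integer $t$, suppose given: an integer $t_0 = t_0(t)$ with $1 \le t_0 < t$; positive integers $d_1,\dots,d_l$ (depending on $t$) with $d = \sum_{i=1}^l d_i$; nonnegative integers $r_1,\dots,r_l$ (depending on $t$) with $r = \sum_{i=1}^l r_i$; and a process $(D_1(\tau),\dots,D_l(\tau))_{\tau = t_0,\dots,t}$ adapted to a filtration $(\mathcal{F}_\tau)$, taking positive-integer values, such that $D_i(t_0) = d_i$ almost surely, at each step $\tau > t_0$ at most one coordinate changes and it increases by exactly $1$, and for each $i$, $\Pr[D_i(\tau) = D_i(\tau-1) +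 1 \mid \mathcal{F}_{\tau-1}] = \frac{p\, D_i(\tau-1)}{2\tau - 1}$ almost surely. Assume $d = o(t^{1/2})$ and $r = o(t^{2/3})$ as $t \to \infty$. Then for all sufficiently large $t$, $\Pr[\,D_i(t) = d_i + r_i \text{ for all } i = 1,\dots,l\,] \le \left(\prod_{i=1}^{l} \binom{r_i + d_i - 1}{d_i - 1}\right) \left(\frac{t_0+1}{t}\right)^{pd/2} \exp\left\{2 + t_0 - \frac{pd}{2} + \frac{3pr}{t^{p/2}}\right\}$. -/
/-!
Write `d = ∑ᵢ dᵢ`, `P_τ(k) = P[D(τ) = k]`, and `c_τ = p / (2τ + 1)` for the jump rate per unit of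
degree at the step `τ → τ + 1`. Integrating the conditional jump probabilities over `{D(τ) = k}`
gives the forward inequality
`P_{τ+1}(k) ≤ ∑ᵢ c_τ (kᵢ - 1) P_τ(k - eᵢ) + (1 - c_τ ∑ k) P_τ(k)`.
With `C(k) = ∏ᵢ binom(kᵢ - 1, dᵢ - 1)` one has `(kᵢ - 1) C(k - eᵢ) = (kᵢ - dᵢ) C(k)`, so by
induction `P_τ(k) ≤ C(k) ∏_{t₀ ≤ s < τ} ρ_s`, where `ρ_s = max (1 - c_s d) c_s` dominates
`c_s J + (1 - c_s (d + J))₊` for every reachable excess `J = ∑ k - d ≤ s + 1 - t₀`. This needs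
`p d ≤ 2 t₀ + 1`, which holds because the jump probabilities at time `t₀` sum to at most one.
For `s > t₀`, `ρ_s ≤ 1 - (pd/2)/(s+1) ≤ ((s+1)/(s+2))^{pd/2}`, so the product telescopes to at
most `((t₀+1)/t)^{pd/2} · e`.
-/

open MeasureTheory Filter Finset

def UnitStep {ι : Type*} (x y : ι → ℕ) : Prop :=
  (∀ i, y i = x i) ∨ ∃ i, y i = x i + 1 ∧ ∀ j, j ≠ i → y j = x j

namespace UnitStep

variable {ι : Type*} {x y : ι → ℕ}

theorem le (h : UnitStep x y) : x ≤ y := by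
  rcases h with hstay | ⟨i, hi, hj⟩
  · exact fun j => (hstay j).ge
  · intro j
    by_cases hji : j = i
    · rw [hji, hi]; exact Nat.le_succ _
    · exact (hj j hji).ge

variable [Fintype ι]

theorem sum_le (h : UnitStep x y) : ∑ i, y i ≤ ∑ i, x i + 1 := by
  classical
  rcases h with hstay | ⟨i, hi, hj⟩
  · simp [hstay]
  · have hy : ∀ j, y j = x j + if j = i then 1 else 0 := fun j => by
      by_cases hji : j = i
      · simp [hji, hi]
      · simp [hji, hj j hji]
    simp [hy, sum_add_distrib]

theorem sum_ite_jump_le (h : UnitStep x y) (P : Prop) [Decidable P] :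
    ∑ i, (if P ∧ y i = x i + 1 then (1 : ℝ) else 0) ≤ if P then 1 else 0 := by
  rcases h with hstay | ⟨i, hi, hj⟩
  · simp only [hstay, Nat.ne_add_one, and_false, if_false, sum_const_zero]
    split_ifs <;> norm_num
  · rw [Fintype.sum_eq_single i fun j hji => by simp [hj j hji]]
    simp [hi]

theorem ite_eq_add_sum_ite_jump_le [DecidableEq ι] (h : UnitStep x y) (k : ι → ℕ) :
    (if y = k then (1 : ℝ) else 0) + ∑ i, (if x = k ∧ y i = x i + 1 then 1 else 0)
      ≤ (if x = k then 1 else 0)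
        + ∑ i, (if x = Function.update k i (k i - 1) ∧ y i = x i + 1 then 1 else 0) := by
  rcases h with hstay | ⟨i, hi, hj⟩
  · simp [show y = x from funext hstay]
  · rw [Fintype.sum_eq_single i fun j hji => by simp [hj j hji],
      Fintype.sum_eq_single i fun j hji => by simp [hj j hji]]
    suffices (if y = k then (1 : ℝ) else 0) ≤ if x = Function.update k i (k i - 1) then 1 else 0 by
      simp only [hi, and_true]; linarith
    split_ifs with hyk hxk <;> try norm_num
    refine hxk (funext fun j => ?_)
    subst hyk
    by_cases hji : j = i
    · subst hji; simp [hi]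
    · simp [hji, hj j hji]

end UnitStep

theorem le_and_sum_le_of_unitStep {ι : Type*} [Fintype ι] {x : ℕ → ι → ℕ}
    {n t : ℕ} (h : ∀ τ, n ≤ τ → τ < t → UnitStep (x τ) (x (τ + 1))) {τ : ℕ} (hnτ : n ≤ τ)
    (hτt : τ ≤ t) : x n ≤ x τ ∧ ∑ i, x τ i ≤ ∑ i, x n i + (τ - n) := by
  induction τ, hnτ using Nat.le_induction with
  | base => simp
  | succ τ hnτ ih =>
    have hstep := h τ hnτ (by omega)
    obtain ⟨hle, hsum⟩ := ih (by omega)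
    exact ⟨hle.trans hstep.le, by have := hstep.sum_le; omega⟩

noncomputable def binomProd {ι : Type*} [Fintype ι] (d₀ k : ι → ℕ) : ℝ :=
  ∏ i, ((k i - 1).choose (d₀ i - 1) : ℝ)

theorem binomProd_nonneg {ι : Type*} [Fintype ι] (d₀ k : ι → ℕ) : 0 ≤ binomProd d₀ k :=
  prod_nonneg fun _ _ => Nat.cast_nonneg _

theorem binomProd_self {ι : Type*} [Fintype ι] (d₀ : ι → ℕ) : binomProd d₀ d₀ = 1 := by
  simp [binomProd]

theorem mul_binomProd_update {ι : Type*} [Fintype ι] [DecidableEq ι] {d₀ : ι → ℕ}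
    (hd₀ : ∀ i, 1 ≤ d₀ i) (k : ι → ℕ) (i : ι) :
    ((k i - 1 : ℕ) : ℝ) * binomProd d₀ (Function.update k i (k i - 1))
      = ((k i - d₀ i : ℕ) : ℝ) * binomProd d₀ k := by
  have hchoose : ∀ a b : ℕ, a * (a - 1).choose b = (a - b) * a.choose b := by
    rintro (_ | a) b
    · simp
    · simpa [mul_comm] using Nat.choose_mul_succ_eq a b
  have hi : (k i - 1) * (k i - 1 - 1).choose (d₀ i - 1)
      = (k i - d₀ i) * (k i - 1).choose (d₀ i - 1) := by
    rw [hchoose, show k i - 1 - (d₀ i - 1) = k i - d₀ i by have := hd₀ i; omega]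
  unfold binomProd
  rw [Fintype.prod_eq_mul_prod_compl i, Fintype.prod_eq_mul_prod_compl i,
    prod_congr rfl fun j hj => by rw [Function.update_of_ne (by simpa using hj)],
    Function.update_self, ← mul_assoc, ← mul_assoc]
  have hiR : ((k i - 1 : ℕ) : ℝ) * ((k i - 1 - 1).choose (d₀ i - 1) : ℝ)
      = ((k i - d₀ i : ℕ) : ℝ) * ((k i - 1).choose (d₀ i - 1) : ℝ) := by exact_mod_cast hi
  rw [hiR]

/-- The second alternative only matters at the first step, where one jump may already be the
whole excess `J`. -/
noncomputable def stepFactor (p d : ℝ) (τ : ℕ) : ℝ :=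
  max (1 - p / (2 * τ + 1) * d) (p / (2 * τ + 1))

noncomputable def decayProd (p d : ℝ) (n τ : ℕ) : ℝ :=
  ∏ s ∈ Ico n τ, stepFactor p d s

section StepFactor

variable {p d : ℝ}

theorem stepFactor_nonneg (hp : 0 ≤ p) (τ : ℕ) : 0 ≤ stepFactor p d τ :=
  le_max_of_le_right (by positivity)

theorem stepFactor_le_one (hp0 : 0 ≤ p) (hp1 : p ≤ 1) (hd : 0 ≤ d) (τ : ℕ) :
    stepFactor p d τ ≤ 1 := by
  have hτ : (1 : ℝ) ≤ 2 * τ + 1 := by linarith [τ.cast_nonneg (α := ℝ)]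
  refine max_le (by linarith [show 0 ≤ p / (2 * τ + 1) * d by positivity]) ?_
  rw [div_le_one (by positivity)]
  linarith

theorem stepFactor_le_one_sub_div (hp0 : 0 ≤ p) (hp1 : p ≤ 1) (hd : 0 ≤ d) {n s : ℕ}
    (hpd : p * d ≤ 2 * n + 1) (hns : n < s) :
    stepFactor p d s ≤ 1 - p * d / 2 / (s + 1) := by
  have hs : (n : ℝ) + 1 ≤ s := by exact_mod_cast hns
  have h2s : (0 : ℝ) < 2 * s + 1 := by positivity
  have hmono : p * d / 2 / (s + 1) ≤ p / (2 * s + 1) * d := by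
    rw [div_mul_eq_mul_div, div_div, div_le_div_iff₀ (by positivity) h2s]
    nlinarith [mul_nonneg hp0 hd]
  have hsum : p / (2 * s + 1) + p / (2 * s + 1) * d ≤ 1 := by
    rw [← mul_one_add, div_mul_eq_mul_div, div_le_one h2s]
    nlinarith
  exact max_le (by linarith) (by linarith)

theorem add_max_le_stepFactor (hp0 : 0 ≤ p) (hp1 : p ≤ 1) {n τ J : ℕ}
    (hpd : p * d ≤ 2 * n + 1) (hJ : J ≤ τ + 1 - n) :
    p / (2 * τ + 1) * J + max 0 (1 - p / (2 * τ + 1) * (d + J)) ≤ stepFactor p d τ := by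
  rcases le_or_gt 0 (1 - p / (2 * τ + 1) * (d + J)) with hstay | hstay
  · rw [max_eq_right hstay]
    exact le_max_of_le_left (by linarith)
  · have hJ1 : J ≤ 1 := by
      by_contra! hJ2
      have hJR : (J : ℝ) + n ≤ τ + 1 := by exact_mod_cast (by omega : J + n ≤ τ + 1)
      have hnτ : (n : ℝ) + 1 ≤ τ := by exact_mod_cast (by omega : n + 1 ≤ τ)
      have : p / (2 * τ + 1) * (d + J) ≤ 1 := by
        rw [div_mul_eq_mul_div, div_le_one (by positivity)]
        nlinarith
      linarith
    rw [max_eq_left hstay.le, add_zero]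
    refine le_max_of_le_right ?_
    interval_cases J
    · simpa using div_nonneg hp0 (by positivity)
    · simp

theorem one_sub_div_le_rpow {a x : ℝ} (ha : 0 ≤ a) (hx : 0 < x) :
    1 - a / x ≤ (x / (x + 1)) ^ a := by
  have hlog : -(1 / x) ≤ Real.log (x / (x + 1)) := by
    have := Real.one_sub_inv_le_log_of_pos (show 0 < x / (x + 1) by positivity)
    rw [inv_div] at this
    linarith [show 1 - (x + 1) / x = -(1 / x) by field_simp; ring]
  calc 1 - a / x ≤ Real.exp (-(a / x)) := by linarith [Real.add_one_le_exp (-(a / x))]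
    _ ≤ Real.exp (Real.log (x / (x + 1)) * a) := by
        rw [Real.exp_le_exp]
        linarith [mul_le_mul_of_nonneg_right hlog ha, show a / x = 1 / x * a by ring]
    _ = (x / (x + 1)) ^ a := (Real.rpow_def_of_pos (by positivity) a).symm

theorem prod_one_sub_div_le_rpow {a : ℝ} (ha0 : 0 ≤ a) {m t : ℕ} (ha : a ≤ m + 1) (hmt : m ≤ t) :
    ∏ s ∈ Ico m t, (1 - a / (s + 1)) ≤ ((m + 1) / (t + 1)) ^ a := by
  induction t, hmt using Nat.le_induction with
  | base => simp [div_self (by positivity : (m : ℝ) + 1 ≠ 0)]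
  | succ t hmt ih =>
    have ht : a ≤ t + 1 := by linarith [(Nat.cast_le (α := ℝ)).2 hmt]
    rw [prod_Ico_succ_top hmt]
    calc (∏ s ∈ Ico m t, (1 - a / (s + 1))) * (1 - a / (t + 1))
        ≤ ((m + 1) / (t + 1)) ^ a * ((t + 1) / (t + 1 + 1)) ^ a := by
          refine mul_le_mul ih (one_sub_div_le_rpow ha0 (by positivity)) ?_ (by positivity)
          rw [sub_nonneg, div_le_one (by positivity)]; exact ht
      _ = ((m + 1) / ((t + 1 : ℕ) + 1)) ^ a := by
          rw [← Real.mul_rpow (by positivity) (by positivity)]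
          congr 1
          push_cast
          field_simp

theorem decayProd_le (hp0 : 0 ≤ p) (hp1 : p ≤ 1) (hd : 0 ≤ d) {n t : ℕ}
    (hpd : p * d ≤ 2 * n + 1) (hnt : n < t) :
    decayProd p d n t ≤ ((n + 1) / t) ^ (p * d / 2) * Real.exp 1 := by
  set a := p * d / 2
  have ha0 : 0 ≤ a := by positivity
  have ha : a ≤ n + 1 := by simp only [a]; linarith
  have ht : (n : ℝ) + 1 ≤ t := by exact_mod_cast hnt
  have htail : ∏ s ∈ Ico (n + 1) t, stepFactor p d s ≤ ((n + 1 + 1) / (t + 1)) ^ a := by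
    calc ∏ s ∈ Ico (n + 1) t, stepFactor p d s ≤ ∏ s ∈ Ico (n + 1) t, (1 - a / (s + 1)) :=
          prod_le_prod (fun s _ => stepFactor_nonneg hp0 s) fun s hs =>
            stepFactor_le_one_sub_div hp0 hp1 hd hpd (mem_Ico.1 hs).1
      _ ≤ _ := by
          simpa using prod_one_sub_div_le_rpow ha0 (by push_cast; linarith) hnt
  have hshift : ((n + 1 + 1) / (t + 1) : ℝ) ^ a ≤ ((n + 1) / t) ^ a * Real.exp 1 := by
    have hratio : ((n + 1 + 1) / (n + 1) : ℝ) ^ a ≤ Real.exp 1 := by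
      calc ((n + 1 + 1) / (n + 1) : ℝ) ^ a ≤ Real.exp (1 / (n + 1)) ^ a := by
            refine Real.rpow_le_rpow (by positivity) ?_ ha0
            linarith [Real.add_one_le_exp (1 / (n + 1)),
              show ((n + 1 + 1) / (n + 1) : ℝ) = 1 / (n + 1) + 1 by field_simp; ring]
        _ ≤ Real.exp 1 := by
            rw [← Real.exp_mul, Real.exp_le_exp, one_div_mul_eq_div, div_le_one (by positivity)]
            exact ha
    calc ((n + 1 + 1) / (t + 1) : ℝ) ^ a ≤ ((n + 1) / t * ((n + 1 + 1) / (n + 1))) ^ a := by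
          refine Real.rpow_le_rpow (by positivity) ?_ ha0
          rw [div_mul_div_comm, mul_comm ((n : ℝ) + 1), mul_div_mul_right _ _ (by positivity)]
          exact div_le_div_of_nonneg_left (by positivity) (by linarith) (by linarith)
      _ ≤ ((n + 1) / t) ^ a * Real.exp 1 := by
          rw [Real.mul_rpow (by positivity) (by positivity)]
          gcongr
  calc decayProd p d n t = stepFactor p d n * ∏ s ∈ Ico (n + 1) t, stepFactor p d s :=
        prod_eq_prod_Ico_succ_bot hnt _
    _ ≤ 1 * ((n + 1 + 1) / (t + 1)) ^ a :=
        mul_le_mul (stepFactor_le_one hp0 hp1 hd n) htail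
          (prod_nonneg fun s _ => stepFactor_nonneg hp0 s) zero_le_one
    _ ≤ ((n + 1) / t) ^ a * Real.exp 1 := by rw [one_mul]; exact hshift

end StepFactor

theorem sum_measureReal_le_of_ae_le {Ω ι κ : Type*} [Fintype ι] [Fintype κ]
    {m0 : MeasurableSpace Ω} {μ : Measure Ω} [IsFiniteMeasure μ] {A : ι → Set Ω} {B : κ → Set Ω}
    (hA : ∀ i, MeasurableSet (A i)) (hB : ∀ j, MeasurableSet (B j))
    (h : ∀ᵐ ω ∂μ, ∑ i, (A i).indicator 1 ω ≤ ∑ j, (B j).indicator (1 : Ω → ℝ) ω) :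
    ∑ i, μ.real (A i) ≤ ∑ j, μ.real (B j) := by
  have hint : ∀ s, MeasurableSet s → Integrable (s.indicator (1 : Ω → ℝ)) μ :=
    fun s hs => (integrable_const 1).indicator hs
  simp only [← integral_indicator_one (hA _), ← integral_indicator_one (hB _)]
  rw [← integral_finsetSum _ fun i _ => hint _ (hA i),
    ← integral_finsetSum _ fun j _ => hint _ (hB j)]
  exact integral_mono_ae (integrable_finsetSum _ fun i _ => hint _ (hA i))
    (integrable_finsetSum _ fun j _ => hint _ (hB j)) h

def jumpSet {Ω ι : Type*} (X : ℕ → Ω → ι → ℕ) (τ : ℕ) (i : ι) : Set Ω :=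
  {ω | X (τ + 1) ω i = X τ ω i + 1}

section JumpProcess

variable {Ω ι : Type*} {m0 : MeasurableSpace Ω} {μ : Measure Ω} {ℱ : Filtration ℕ m0}
  {X : ℕ → Ω → ι → ℕ}

theorem measurableSet_jumpSet (hadapted : ∀ τ, Measurable[ℱ τ] (X τ)) (τ : ℕ) (i : ι) :
    MeasurableSet (jumpSet X τ i) :=
  have hXi : ∀ τ, Measurable fun ω => X τ ω i := fun τ =>
    (measurable_pi_apply i).comp ((hadapted τ).mono (ℱ.le τ) le_rfl)
  measurableSet_eq_fun (hXi (τ + 1)) ((hXi τ).add_const 1)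

theorem measureReal_inter_jumpSet [IsFiniteMeasure μ] (hadapted : ∀ τ, Measurable[ℱ τ] (X τ))
    {c : ℝ} {τ : ℕ} {i : ι}
    (hcond : μ[(jumpSet X τ i).indicator 1 | ℱ τ] =ᵐ[μ] fun ω => c * X τ ω i)
    {s : Set Ω} (hs : MeasurableSet[ℱ τ] s) {m : ℕ} (hm : ∀ ω ∈ s, X τ ω i = m) :
    μ.real (s ∩ jumpSet X τ i) = c * m * μ.real s := by
  have hJ := measurableSet_jumpSet hadapted τ i
  calc μ.real (s ∩ jumpSet X τ i) = ∫ ω in s, (jumpSet X τ i).indicator 1 ω ∂μ := by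
        rw [integral_indicator_one hJ, measureReal_restrict_apply hJ, Set.inter_comm]
    _ = ∫ ω in s, μ[(jumpSet X τ i).indicator 1 | ℱ τ] ω ∂μ :=
        (setIntegral_condExp (ℱ.le τ) ((integrable_const 1).indicator hJ) hs).symm
    _ = ∫ ω in s, c * m ∂μ := by
        refine setIntegral_congr_ae (ℱ.le τ _ hs) (hcond.mono fun ω hω hωs => ?_)
        simp only [hω, hm ω hωs]
    _ = c * m * μ.real s := by rw [setIntegral_const, smul_eq_mul, mul_comm]

theorem sum_measureReal_inter_jumpSet_le [Fintype ι] [IsFiniteMeasure μ]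
    (hadapted : ∀ τ, Measurable[ℱ τ] (X τ)) {τ : ℕ}
    (hstep : ∀ᵐ ω ∂μ, UnitStep (X τ ω) (X (τ + 1) ω)) {s : Set Ω} (hs : MeasurableSet s) :
    ∑ i, μ.real (s ∩ jumpSet X τ i) ≤ μ.real s := by
  classical
  have := sum_measureReal_le_of_ae_le (μ := μ) (B := fun _ : Unit => s)
    (fun i => hs.inter (measurableSet_jumpSet hadapted τ i)) (fun _ => hs)
    (hstep.mono fun ω hω => by
      simpa [Set.indicator_apply, jumpSet] using hω.sum_ite_jump_le (ω ∈ s))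
  simpa using this

theorem measureReal_succ_le [Fintype ι] [DecidableEq ι] [IsFiniteMeasure μ]
    (hadapted : ∀ τ, Measurable[ℱ τ] (X τ)) {c : ℝ} {τ : ℕ}
    (hstep : ∀ᵐ ω ∂μ, UnitStep (X τ ω) (X (τ + 1) ω))
    (hcond : ∀ i, μ[(jumpSet X τ i).indicator 1 | ℱ τ] =ᵐ[μ] fun ω => c * X τ ω i)
    (k : ι → ℕ) :
    μ.real {ω | X (τ + 1) ω = k}
      ≤ ∑ i, c * (k i - 1 : ℕ) * μ.real {ω | X τ ω = Function.update k i (k i - 1)}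
        + (1 - c * ∑ i, (k i : ℝ)) * μ.real {ω | X τ ω = k} := by
  have hS : ∀ τ k, MeasurableSet[ℱ τ] {ω | X τ ω = k} := fun τ k =>
    hadapted τ (measurableSet_singleton k)
  have hS₀ : ∀ τ k, MeasurableSet {ω | X τ ω = k} := fun τ k => ℱ.le τ _ (hS τ k)
  have hJ := measurableSet_jumpSet hadapted τ
  have key := sum_measureReal_le_of_ae_le (μ := μ)
    (A := fun o : Option ι => o.elim {ω | X (τ + 1) ω = k} fun i => {ω | X τ ω = k} ∩ jumpSet X τ i)
    (B := fun o : Option ι => o.elim {ω | X τ ω = k} fun i =>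
      {ω | X τ ω = Function.update k i (k i - 1)} ∩ jumpSet X τ i)
    (fun o => o.rec (hS₀ _ k) fun i => (hS₀ τ k).inter (hJ i))
    (fun o => o.rec (hS₀ τ k) fun i => (hS₀ τ _).inter (hJ i))
    (hstep.mono fun ω hω => by
      simpa [Fintype.sum_option, Set.indicator_apply, jumpSet]
        using hω.ite_eq_add_sum_ite_jump_le k)
  simp only [Fintype.sum_option, Option.elim] at key
  have hstay : ∑ i, μ.real ({ω | X τ ω = k} ∩ jumpSet X τ i)
      = c * (∑ i, (k i : ℝ)) * μ.real {ω | X τ ω = k} := by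
    rw [mul_sum, sum_mul]
    exact sum_congr rfl fun i _ =>
      measureReal_inter_jumpSet hadapted (hcond i) (hS τ k) fun ω hω => congrFun hω i
  have hjump : ∀ i, μ.real ({ω | X τ ω = Function.update k i (k i - 1)} ∩ jumpSet X τ i)
      = c * (k i - 1 : ℕ) * μ.real {ω | X τ ω = Function.update k i (k i - 1)} := fun i =>
    measureReal_inter_jumpSet hadapted (hcond i) (hS τ _) fun ω hω => by
      rw [show X τ ω = _ from hω, Function.update_self]
  rw [hstay, sum_congr rfl fun i _ => hjump i] at key
  linarith

end JumpProcess

/-- `X τ ω i` is the degree of supernode `i` at time `τ ∈ [n, t]`; the paper's condition on the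
step `τ - 1 → τ` is stated here for the step `τ → τ + 1`, whence the denominator `2τ + 1`. -/
structure IsSupernodeProcess {Ω ι : Type*} {m0 : MeasurableSpace Ω} (μ : Measure Ω)
    (ℱ : Filtration ℕ m0) (p : ℝ) (n t : ℕ) (d₀ : ι → ℕ) (X : ℕ → Ω → ι → ℕ) : Prop where
  adapted : ∀ τ, Measurable[ℱ τ] (X τ)
  init : ∀ᵐ ω ∂μ, X n ω = d₀
  step : ∀ τ, n ≤ τ → τ < t → ∀ᵐ ω ∂μ, UnitStep (X τ ω) (X (τ + 1) ω)
  cond : ∀ τ, n ≤ τ → τ < t → ∀ i,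
    μ[(jumpSet X τ i).indicator 1 | ℱ τ] =ᵐ[μ] fun ω => p / (2 * τ + 1) * X τ ω i

namespace IsSupernodeProcess

variable {Ω ι : Type*} [Fintype ι] {m0 : MeasurableSpace Ω} {μ : Measure Ω}
  {ℱ : Filtration ℕ m0} {p : ℝ} {n t : ℕ} {d₀ : ι → ℕ} {X : ℕ → Ω → ι → ℕ}

theorem measure_eq_zero (hX : IsSupernodeProcess μ ℱ p n t d₀ X) {τ : ℕ} (hnτ : n ≤ τ)
    (hτt : τ ≤ t) {k : ι → ℕ} (hk : ¬(d₀ ≤ k ∧ ∑ i, k i ≤ ∑ i, d₀ i + (τ - n))) :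
    μ {ω | X τ ω = k} = 0 := by
  have hsteps : ∀ᵐ ω ∂μ, ∀ τ, n ≤ τ → τ < t → UnitStep (X τ ω) (X (τ + 1) ω) :=
    ae_all_iff.2 fun τ => by simpa only [eventually_imp_distrib_left] using hX.step τ
  rw [measure_eq_zero_iff_ae_notMem]
  filter_upwards [hX.init, hsteps] with ω hinit hstep hωk
  exact hk (hωk ▸ hinit ▸ le_and_sum_le_of_unitStep hstep hnτ hτt)

theorem mul_sum_le [IsProbabilityMeasure μ] (hX : IsSupernodeProcess μ ℱ p n t d₀ X)
    (hnt : n < t) :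
    p * ∑ i, (d₀ i : ℝ) ≤ 2 * n + 1 := by
  set S := {ω | X n ω = d₀}
  have hS : MeasurableSet[ℱ n] S := hX.adapted n (measurableSet_singleton d₀)
  have hS1 : μ.real S = 1 := by
    rw [measureReal_def, (prob_compl_eq_zero_iff (ℱ.le n _ hS)).1 (ae_iff.1 hX.init)]
    simp
  have hsum := sum_measureReal_inter_jumpSet_le hX.adapted (hX.step n le_rfl hnt) (ℱ.le n _ hS)
  rw [sum_congr rfl fun i _ => measureReal_inter_jumpSet hX.adapted (hX.cond n le_rfl hnt i) hS
    fun ω hω => congrFun hω i, ← sum_mul, ← mul_sum, hS1, mul_one, div_mul_eq_mul_div,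
    div_le_one (by positivity)] at hsum
  exact hsum

theorem measureReal_succ_le_binomProd_mul [DecidableEq ι] [IsFiniteMeasure μ]
    (hX : IsSupernodeProcess μ ℱ p n t d₀ X)
    (hp0 : 0 ≤ p) (hp1 : p ≤ 1) (hd₀ : ∀ i, 1 ≤ d₀ i) (hpd : p * ∑ i, (d₀ i : ℝ) ≤ 2 * n + 1)
    {τ : ℕ} (hnτ : n ≤ τ) (hτt : τ < t) {B : ℝ} (hB : 0 ≤ B)
    (ih : ∀ k, μ.real {ω | X τ ω = k} ≤ binomProd d₀ k * B) (k : ι → ℕ) :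
    μ.real {ω | X (τ + 1) ω = k}
      ≤ binomProd d₀ k * (B * stepFactor p (∑ i, (d₀ i : ℝ)) τ) := by
  by_cases hk : d₀ ≤ k ∧ ∑ i, k i ≤ ∑ i, d₀ i + (τ + 1 - n)
  swap
  · rw [measureReal_def, hX.measure_eq_zero (by omega) hτt hk, ENNReal.toReal_zero]
    exact mul_nonneg (binomProd_nonneg d₀ k) (mul_nonneg hB (stepFactor_nonneg hp0 τ))
  obtain ⟨hdk, hsum⟩ := hk
  have hc0 : 0 ≤ p / (2 * (τ : ℝ) + 1) := by positivity
  set c := p / (2 * (τ : ℝ) + 1)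
  obtain ⟨J, hJ⟩ : ∃ J, ∑ i, (k i - d₀ i) = J := ⟨_, rfl⟩
  have hJk : ∑ i, k i = ∑ i, d₀ i + J := by
    rw [← hJ, ← sum_add_distrib]; exact sum_congr rfl fun i _ => (Nat.add_sub_of_le (hdk i)).symm
  have hjumps : ∑ i, c * (k i - 1 : ℕ) * (binomProd d₀ (Function.update k i (k i - 1)) * B)
      = binomProd d₀ k * B * (c * J) :=
    calc _ = ∑ i, c * B * ((k i - 1 : ℕ) * binomProd d₀ (Function.update k i (k i - 1))) :=
          sum_congr rfl fun i _ => by ring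
      _ = ∑ i, c * B * ((k i - d₀ i : ℕ) * binomProd d₀ k) := by
          simp_rw [mul_binomProd_update hd₀]
      _ = binomProd d₀ k * B * (c * J) := by
          rw [← mul_sum, ← sum_mul, ← Nat.cast_sum, hJ]; ring
  calc μ.real {ω | X (τ + 1) ω = k}
      ≤ ∑ i, c * (k i - 1 : ℕ) * μ.real {ω | X τ ω = Function.update k i (k i - 1)}
        + (1 - c * ∑ i, (k i : ℝ)) * μ.real {ω | X τ ω = k} :=
        measureReal_succ_le hX.adapted (hX.step τ hnτ hτt) (hX.cond τ hnτ hτt) k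
    _ ≤ ∑ i, c * (k i - 1 : ℕ) * (binomProd d₀ (Function.update k i (k i - 1)) * B)
        + max 0 (1 - c * ∑ i, (k i : ℝ)) * (binomProd d₀ k * B) := by
        refine add_le_add
          (sum_le_sum fun i _ => mul_le_mul_of_nonneg_left (ih _) (by positivity)) ?_
        calc _ ≤ max 0 (1 - c * ∑ i, (k i : ℝ)) * μ.real {ω | X τ ω = k} :=
              mul_le_mul_of_nonneg_right (le_max_right _ _) measureReal_nonneg
          _ ≤ _ := mul_le_mul_of_nonneg_left (ih k) (le_max_left _ _)
    _ = binomProd d₀ k * B * (c * J + max 0 (1 - c * (∑ i, (d₀ i : ℝ) + J))) := by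
        rw [hjumps, ← Nat.cast_sum, hJk]; push_cast; ring
    _ ≤ binomProd d₀ k * (B * stepFactor p (∑ i, (d₀ i : ℝ)) τ) := by
        rw [← mul_assoc]
        exact mul_le_mul_of_nonneg_left (add_max_le_stepFactor hp0 hp1 hpd (by omega))
          (mul_nonneg (binomProd_nonneg d₀ k) hB)

theorem measureReal_le_binomProd_mul_decayProd [DecidableEq ι] [IsProbabilityMeasure μ]
    (hX : IsSupernodeProcess μ ℱ p n t d₀ X)
    (hp0 : 0 ≤ p) (hp1 : p ≤ 1) (hd₀ : ∀ i, 1 ≤ d₀ i) (hpd : p * ∑ i, (d₀ i : ℝ) ≤ 2 * n + 1)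
    {τ : ℕ} (hnτ : n ≤ τ) (hτt : τ ≤ t) (k : ι → ℕ) :
    μ.real {ω | X τ ω = k} ≤ binomProd d₀ k * decayProd p (∑ i, (d₀ i : ℝ)) n τ := by
  induction τ, hnτ using Nat.le_induction generalizing k with
  | base =>
    rw [decayProd, Ico_self, prod_empty, mul_one]
    by_cases hk : k = d₀
    · rw [hk, binomProd_self]; exact measureReal_le_one
    · have hsupp : ¬(d₀ ≤ k ∧ ∑ i, k i ≤ ∑ i, d₀ i + (n - n)) := by
        rintro ⟨hle, hsum⟩
        refine hk (funext fun i => ?_)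
        have hsum_eq : ∑ i, d₀ i = ∑ i, k i :=
          le_antisymm (sum_le_sum fun i _ => hle i) (by simpa using hsum)
        exact ((sum_eq_sum_iff_of_le fun i _ => hle i).1 hsum_eq i (mem_univ i)).symm
      rw [measureReal_def, hX.measure_eq_zero le_rfl (by omega) hsupp, ENNReal.toReal_zero]
      exact binomProd_nonneg d₀ k
  | succ τ hnτ ih =>
    rw [decayProd, prod_Ico_succ_top hnτ]
    exact hX.measureReal_succ_le_binomProd_mul hp0 hp1 hd₀ hpd hnτ (by omega)
      (prod_nonneg fun s _ => stepFactor_nonneg hp0 s) (ih (by omega)) k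

theorem measureReal_le [DecidableEq ι] [IsProbabilityMeasure μ]
    (hX : IsSupernodeProcess μ ℱ p n t d₀ X) (hp0 : 0 ≤ p) (hp1 : p ≤ 1) (hd₀ : ∀ i, 1 ≤ d₀ i)
    (hnt : n < t) (k : ι → ℕ) :
    μ.real {ω | X t ω = k}
      ≤ binomProd d₀ k * (((n + 1) / t) ^ (p * (∑ i, (d₀ i : ℝ)) / 2) * Real.exp 1) :=
  (hX.measureReal_le_binomProd_mul_decayProd hp0 hp1 hd₀ (hX.mul_sum_le hnt) hnt.le le_rfl k).trans
    (mul_le_mul_of_nonneg_left (decayProd_le hp0 hp1 (by positivity) (hX.mul_sum_le hnt) hnt)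
      (binomProd_nonneg d₀ k))

end IsSupernodeProcess

theorem stmt_8_general (p : ℝ) (hp0 : 0 < p) (hp1 : p ≤ 1) (l : ℕ)
    (Ω : ℕ → Type*) (mΩ : ∀ t : ℕ, MeasurableSpace (Ω t))
    (μ : ∀ t : ℕ, Measure (Ω t)) (hprob : ∀ t, IsProbabilityMeasure (μ t))
    (ℱ : ∀ t : ℕ, Filtration ℕ (mΩ t))
    (t0 : ℕ → ℕ) (dv rv : ℕ → Fin l → ℕ)
    (D : ∀ t : ℕ, Fin l → ℕ → Ω t → ℕ)
    (ht0 : ∀ t : ℕ, 2 ≤ t → 1 ≤ t0 t ∧ t0 t < t)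
    (hdpos : ∀ t i, 1 ≤ dv t i)
    (hinit : ∀ t i, ∀ᵐ ω ∂μ t, D t i (t0 t) ω = dv t i)
    (hadapted : ∀ t i τ, Measurable[ℱ t τ] (D t i τ))
    (hstep : ∀ t τ : ℕ, t0 t < τ → τ ≤ t → ∀ᵐ ω ∂μ t,
      (∀ i, D t i τ ω = D t i (τ - 1) ω) ∨
        (∃ i, D t i τ ω = D t i (τ - 1) ω + 1 ∧
          ∀ j, j ≠ i → D t j τ ω = D t j (τ - 1) ω))
    (hcond : ∀ t : ℕ, ∀ i : Fin l, ∀ τ : ℕ, t0 t < τ → τ ≤ t →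
      (μ t)[Set.indicator {ω | D t i τ ω = D t i (τ - 1) ω + 1} (fun _ => (1 : ℝ)) |
          ℱ t (τ - 1)]
        =ᵐ[μ t] fun ω => p * (D t i (τ - 1) ω : ℝ) / (2 * (τ : ℝ) - 1)) :
    ∀ᶠ t : ℕ in atTop,
      (μ t {ω | ∀ i, D t i t ω = dv t i + rv t i}).toReal ≤
        (∏ i, ((rv t i + dv t i - 1).choose (dv t i - 1) : ℝ)) *
          (((t0 t : ℝ) + 1) / (t : ℝ)) ^ (p * ((∑ i, dv t i : ℕ) : ℝ) / 2) *
          Real.exp (2 + (t0 t : ℝ) - p * ((∑ i, dv t i : ℕ) : ℝ) / 2 +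
            3 * p * ((∑ i, rv t i : ℕ) : ℝ) / (t : ℝ) ^ (p / 2)) := by
  filter_upwards [eventually_ge_atTop 2] with t ht
  have hnt := (ht0 t ht).2
  have hX : IsSupernodeProcess (μ t) (ℱ t) p (t0 t) t (dv t) fun τ ω i => D t i τ ω :=
    { adapted := fun τ => @measurable_pi_lambda _ _ _ (ℱ t τ) _ _ fun i => hadapted t i τ
      init := by simpa only [funext_iff] using ae_all_iff.2 (hinit t)
      step := fun τ _ hτt => by simpa [UnitStep] using hstep t (τ + 1) (by omega) hτt
      cond := fun τ _ hτt i => by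
        have h := hcond t i (τ + 1) (by omega) hτt
        rw [Nat.add_sub_cancel] at h
        refine h.trans (Eventually.of_forall fun ω => ?_)
        push_cast
        ring }
  have hset : {ω | ∀ i, D t i t ω = dv t i + rv t i}
      = {ω | (fun i => D t i t ω) = dv t + rv t} := by
    ext ω; simp [funext_iff]
  have hC : binomProd (dv t) (dv t + rv t)
      = ∏ i, ((rv t i + dv t i - 1).choose (dv t i - 1) : ℝ) :=
    prod_congr rfl fun i _ => by rw [Pi.add_apply, add_comm]
  have hpd := hX.mul_sum_le hnt
  rw [hset, ← measureReal_def, ← hC, Nat.cast_sum, mul_assoc]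
  refine (hX.measureReal_le hp0.le hp1 (hdpos t) hnt _).trans ?_
  gcongr
  · exact binomProd_nonneg _ _
  have : 0 ≤ 3 * p * ((∑ i, rv t i : ℕ) : ℝ) / (t : ℝ) ^ (p / 2) := by positivity
  linarith

/-- Lemma 2 (supernode degree evolution bound for GPA): let `(D t i τ)` be, for each
time horizon `t`, the degrees of `l` disjoint supernodes in a preferential-attachment
process with node-event probability `p`, with initial degrees `dv t i` at time `t0 t`,
at most one coordinate increasing by exactly one per step, and jump probabilities
`p * D t i (τ-1) / (2 τ - 1)`.  If `d t = ∑ i, dv t i = o(t^(1/2))` and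
`r t = ∑ i, rv t i = o(t^(2/3))`, then for all sufficiently large `t`,
`P[∀ i, D t i t = dv t i + rv t i] ≤ (∏ i, C(rv t i + dv t i - 1, dv t i - 1)) *
  ((t0 t + 1)/t)^(p d t / 2) * exp(2 + t0 t - p (d t) / 2 + 3 p (r t) / t^(p/2))`. -/
theorem stmt_8 (p : ℝ) (hp0 : 0 < p) (hp1 : p ≤ 1) (l : ℕ) (hl : 1 ≤ l)
    (Ω : ℕ → Type*) (mΩ : ∀ t : ℕ, MeasurableSpace (Ω t))
    (μ : ∀ t : ℕ, Measure (Ω t)) (hprob : ∀ t, IsProbabilityMeasure (μ t))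
    (ℱ : ∀ t : ℕ, Filtration ℕ (mΩ t))
    (t0 : ℕ → ℕ) (dv rv : ℕ → Fin l → ℕ)
    (D : ∀ t : ℕ, Fin l → ℕ → Ω t → ℕ)
    (ht0 : ∀ t : ℕ, 2 ≤ t → 1 ≤ t0 t ∧ t0 t < t)
    (hdpos : ∀ t i, 1 ≤ dv t i)
    (hinit : ∀ t i, ∀ᵐ ω ∂μ t, D t i (t0 t) ω = dv t i)
    (hadapted : ∀ t i τ, Measurable[ℱ t τ] (D t i τ))
    (hstep : ∀ t τ : ℕ, t0 t < τ → τ ≤ t → ∀ᵐ ω ∂μ t,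
      (∀ i, D t i τ ω = D t i (τ - 1) ω) ∨
        (∃ i, D t i τ ω = D t i (τ - 1) ω + 1 ∧
          ∀ j, j ≠ i → D t j τ ω = D t j (τ - 1) ω))
    (hcond : ∀ t : ℕ, ∀ i : Fin l, ∀ τ : ℕ, t0 t < τ → τ ≤ t →
      (μ t)[Set.indicator {ω | D t i τ ω = D t i (τ - 1) ω + 1} (fun _ => (1 : ℝ)) |
          ℱ t (τ - 1)]
        =ᵐ[μ t] fun ω => p * (D t i (τ - 1) ω : ℝ) / (2 * (τ : ℝ) - 1))
    (hd : (fun t : ℕ => ((∑ i, dv t i : ℕ) : ℝ)) =o[atTop]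
      fun t : ℕ => (t : ℝ) ^ ((1 : ℝ) / 2))
    (hr : (fun t : ℕ => ((∑ i, rv t i : ℕ) : ℝ)) =o[atTop]
      fun t : ℕ => (t : ℝ) ^ ((2 : ℝ) / 3)) :
    ∀ᶠ t : ℕ in atTop,
      (μ t {ω | ∀ i, D t i t ω = dv t i + rv t i}).toReal ≤
        (∏ i, ((rv t i + dv t i - 1).choose (dv t i - 1) : ℝ)) *
          (((t0 t : ℝ) + 1) / (t : ℝ)) ^ (p * ((∑ i, dv t i : ℕ) : ℝ) / 2) *
          Real.exp (2 + (t0 t : ℝ) - p * ((∑ i, dv t i : ℕ) : ℝ) / 2 +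
            3 * p * ((∑ i, rv t i : ℕ) : ℝ) / (t : ℝ) ^ (p / 2)) :=
  stmt_8_general p hp0 hp1 l Ω mΩ μ hprob ℱ t0 dv rv D ht0 hdpos hinit hadapted hstep hcond
end

section
/- Let $A$ be a real symmetric $n \times n$ matrix whose largest eigenvalue $\lambda_1(A)$ is nonnegative. Let $m \ge 1$ be an integer and let $C$ be an $n \times n'$ matrix with entries in $\{0,1\}$ such that every row of $C$ has exactly one nonzero entry and every column of $C$ has at least one and at most $m$ nonzero entries. Then the largest eigenvalue of the symmetric matrix $C^{T} A C$ satisfies $\lambda_1(C^{T} A C) \le m \, \lambda_1(A)$. -/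
/-!
Each row of `C` holds a single `1`, so `C x = x ∘ φ` for the map `φ` sending a row to the column
of its `1`; as every column is hit at most `m` times, `‖C x‖² ≤ m ‖x‖²`. Hence
`xᵀ (Cᵀ A C) x = (C x)ᵀ A (C x) ≤ λ₁(A) ‖C x‖² ≤ m λ₁(A) ‖x‖²` (using `λ₁(A) ≥ 0`), and a bound
on the Rayleigh quotient of a symmetric matrix bounds its eigenvalues.
-/

open Matrix

section Rayleigh

variable {ι : Type*} [Fintype ι] [DecidableEq ι]

open MatrixOrder in
/-- Both sides say `A ≤ c • 1` in the Loewner order. -/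
theorem Matrix.IsHermitian.forall_dotProduct_mulVec_le_iff {A : Matrix ι ι ℝ}
    (hA : A.IsHermitian) (c : ℝ) :
    (∀ x, x ⬝ᵥ (A *ᵥ x) ≤ c * (x ⬝ᵥ x)) ↔ ∀ i, hA.eigenvalues i ≤ c := by
  have hspec : (∀ i, hA.eigenvalues i ≤ c) ↔ ∀ r ∈ spectrum ℝ A, r ≤ c := by
    simp [hA.spectrum_real_eq_range_eigenvalues]
  rw [hspec, ← le_algebraMap_iff_spectrum_le hA.isSelfAdjoint, le_iff,
    posSemidef_iff_dotProduct_mulVec,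
    and_iff_right (isHermitian_iff_isSelfAdjoint.mpr
      (((IsSelfAdjoint.all c).algebraMap _).sub hA.isSelfAdjoint)),
    Algebra.algebraMap_eq_smul_one]
  simp [sub_mulVec, dotProduct_sub, smul_mulVec]

theorem Matrix.IsHermitian.dotProduct_mulVec_le_iSup_eigenvalues_mul {A : Matrix ι ι ℝ}
    (hA : A.IsHermitian) (x : ι → ℝ) :
    x ⬝ᵥ (A *ᵥ x) ≤ (⨆ i, hA.eigenvalues i) * (x ⬝ᵥ x) :=
  (hA.forall_dotProduct_mulVec_le_iff _).mpr
    (fun i => le_ciSup (Set.finite_range _).bddAbove i) x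

end Rayleigh

section Contraction

variable {ι κ R : Type*} [DecidableEq κ]

theorem Matrix.exists_eq_ite_of_existsUnique_ne_zero [Zero R] [One R] {C : Matrix ι κ R}
    (hC01 : ∀ i j, C i j = 0 ∨ C i j = 1) (hrow : ∀ i, ∃! j, C i j ≠ 0) :
    ∃ φ : ι → κ, ∀ i j, C i j = if φ i = j then 1 else 0 := by
  choose φ hφ using hrow
  refine ⟨φ, fun i j => ?_⟩
  split_ifs with h
  · exact (hC01 i j).resolve_left (h ▸ (hφ i).1)
  · exact not_not.mp fun hne => h ((hφ i).2 j hne).symm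

theorem Matrix.mulVec_eq_comp_of_eq_ite [Fintype κ] [NonAssocSemiring R] {C : Matrix ι κ R}
    {φ : ι → κ} (hC : ∀ i j, C i j = if φ i = j then 1 else 0) (v : κ → R) :
    C *ᵥ v = v ∘ φ := by
  ext i
  simp [mulVec, dotProduct, hC]

theorem dotProduct_self_comp_le [Fintype ι] [Fintype κ] [CommRing R] [LinearOrder R]
    [IsStrictOrderedRing R] {φ : ι → κ} {m : ℕ}
    (hφ : ∀ j, (Finset.univ.filter fun i => φ i = j).card ≤ m) (v : κ → R) :
    (v ∘ φ) ⬝ᵥ (v ∘ φ) ≤ m * (v ⬝ᵥ v) := by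
  simp only [dotProduct, Function.comp_apply]
  rw [Finset.mul_sum, ← Finset.sum_fiberwise' Finset.univ φ fun j => v j * v j]
  refine Finset.sum_le_sum fun j _ => ?_
  rw [Finset.sum_const, nsmul_eq_mul]
  exact mul_le_mul_of_nonneg_right (by exact_mod_cast hφ j) (mul_self_nonneg _)

end Contraction

theorem stmt_12_general (n n' : ℕ)
    (A : Matrix (Fin n) (Fin n) ℝ) (hA : A.IsHermitian)
    (m : ℕ)
    (C : Matrix (Fin n) (Fin n') ℝ)
    (hC01 : ∀ i j, C i j = 0 ∨ C i j = 1)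
    (hrow : ∀ i : Fin n, ∃! j : Fin n', C i j ≠ 0)
    (hcol : ∀ j : Fin n',
      1 ≤ (Finset.univ.filter (fun i => C i j ≠ 0)).card ∧
        (Finset.univ.filter (fun i => C i j ≠ 0)).card ≤ m)
    (hB : (Cᵀ * A * C).IsHermitian)
    (hpos : 0 ≤ ⨆ i, hA.eigenvalues i) :
    (⨆ j, hB.eigenvalues j) ≤ (m : ℝ) * ⨆ i, hA.eigenvalues i := by
  set μ := ⨆ i, hA.eigenvalues i
  obtain ⟨φ, hφ⟩ := exists_eq_ite_of_existsUnique_ne_zero hC01 hrow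
  have hfibre : ∀ j, (Finset.univ.filter fun i => φ i = j).card ≤ m := by
    simpa [hφ] using fun j => (hcol j).2
  refine Real.iSup_le (fun j => (hB.forall_dotProduct_mulVec_le_iff _).mp (fun x => ?_) j)
    (mul_nonneg m.cast_nonneg hpos)
  calc x ⬝ᵥ ((Cᵀ * A * C) *ᵥ x) = (C *ᵥ x) ⬝ᵥ (A *ᵥ (C *ᵥ x)) := by
        rw [Matrix.mul_assoc, ← mulVec_mulVec, dotProduct_mulVec, vecMul_transpose,
          ← mulVec_mulVec]
    _ ≤ μ * ((C *ᵥ x) ⬝ᵥ (C *ᵥ x)) := hA.dotProduct_mulVec_le_iSup_eigenvalues_mul _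
    _ ≤ μ * (m * (x ⬝ᵥ x)) := by
        rw [mulVec_eq_comp_of_eq_ite hφ]
        exact mul_le_mul_of_nonneg_left (dotProduct_self_comp_le hfibre x) hpos
    _ = m * μ * (x ⬝ᵥ x) := by ring

/-- If `A` is a real symmetric `n × n` matrix whose largest eigenvalue is nonnegative,
and `C` is an `n × n'` 0/1 contraction matrix (each row has exactly one nonzero entry,
each column has at least one and at most `m` nonzero entries), then the largest
eigenvalue of `Cᵀ A C` is at most `m` times the largest eigenvalue of `A`. -/
theorem stmt_12 (n n' : ℕ) (hn : 0 < n) (hn' : 0 < n')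
    (A : Matrix (Fin n) (Fin n) ℝ) (hA : A.IsHermitian)
    (m : ℕ) (hm : 1 ≤ m)
    (C : Matrix (Fin n) (Fin n') ℝ)
    (hC01 : ∀ i j, C i j = 0 ∨ C i j = 1)
    (hrow : ∀ i : Fin n, ∃! j : Fin n', C i j ≠ 0)
    (hcol : ∀ j : Fin n',
      1 ≤ (Finset.univ.filter (fun i => C i j ≠ 0)).card ∧
        (Finset.univ.filter (fun i => C i j ≠ 0)).card ≤ m)
    (hB : (Cᵀ * A * C).IsHermitian)
    (hpos : 0 ≤ ⨆ i, hA.eigenvalues i) :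
    (⨆ j, hB.eigenvalues j) ≤ (m : ℝ) * ⨆ i, hA.eigenvalues i :=
  stmt_12_general n n' A hA m C hC01 hrow hcol hB hpos
end
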